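/- Let X be a non-discrete metrizable topological space, let n ≥ 2 be an integer, and let f : ℝ^{n(n−1)/2} → ℝ be a continuous function (whose argument is indexed by the unordered pairs {i,j} with 1 ≤ i < j ≤ n). Assume that f is positively sub-homogeneous, i.e., there exists c ∈ (0,∞) such that f(r·x) ≤ r^c · f(x) for every x ∈ ℝ^{n(n−1)/2} and every r ∈ (0,∞), and assume that there exists a metric space not satisfying the (n, f)-metric inequality. Then the set of all d ∈ Met(X) such that (X, d) does not satisfy the (n, f)-metric inequality is a dense open subset of Met(X). -/

import Mathlib

open scoped ENNReal

universe u v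

/-- The distance function of a bundled metric-space structure. -/
noncomputable def mdist {X : Type*} (m : MetricSpace X) (x y : X) : ℝ :=
  m.toDist.dist x y

/-- `Met(X)`: the set of metrics (bundled metric-space structures) on `X` that induce
the given topology of `X`. -/
def MetricsOn (X : Type*) [t : TopologicalSpace X] : Set (MetricSpace X) :=
  { m | m.toUniformSpace.toTopologicalSpace = t }

/-- The extended sup-metric `D_X` on metrics on `X`. -/
noncomputable def metD {X : Type*} (d e : MetricSpace X) : ℝ≥0∞ :=
  ⨆ p : X × X, ENNReal.ofReal |mdist d p.1 p.2 - mdist e p.1 p.2|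

/-- The space `Met(X)` of metrics on `X` compatible with its topology. -/
def Met (X : Type*) [TopologicalSpace X] : Type _ :=
  { m : MetricSpace X // m ∈ MetricsOn X }

/-- The topology on `Met(X)` generated by the extended metric `D_X`, i.e. generated by the
open balls of `D_X`. -/
instance Met.topologicalSpace (X : Type*) [TopologicalSpace X] : TopologicalSpace (Met X) :=
  TopologicalSpace.generateFrom
    { U | ∃ (d : Met X) (ε : ℝ≥0∞), 0 < ε ∧ U = { e : Met X | metD d.1 e.1 < ε } }

/-- The index type of unordered pairs `{i, j}` with `1 ≤ i < j ≤ n`. -/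
def PairIdx (n : ℕ) : Type :=
  { p : Fin n × Fin n // p.1 < p.2 }

/-- A metric space `(Y, m)` satisfies the `(n, f)`-metric inequality if
`f({d(a_i, a_j)}_{i<j}) ≥ 0` for all `n`-tuples of points. -/
def SatisfiesMetricIneq {Y : Type*} (m : MetricSpace Y) (n : ℕ)
    (f : (PairIdx n → ℝ) → ℝ) : Prop :=
  ∀ a : Fin n → Y, 0 ≤ f fun p => mdist m (a p.1.1) (a p.1.2)

/-- `f` is positively sub-homogeneous: there is `c > 0` with `f(r·x) ≤ r^c f(x)` for all `x`
and all `r > 0` (with a real-power exponent). -/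
def PositivelySubHomogeneous {n : ℕ} (f : (PairIdx n → ℝ) → ℝ) : Prop :=
  ∃ c : ℝ, 0 < c ∧ ∀ (x : PairIdx n → ℝ) (r : ℝ), 0 < r → f (r • x) ≤ r ^ c * f x

/-!
Openness: a failing configuration keeps failing under a `D_X`-small change of the metric,
because `f` is continuous.

Density: take a failing configuration `a` in some metric space `Y`; by sub-homogeneity every
rescaling `r • a` (`r > 0`) fails too. Near a non-isolated point `p` of `(X, d)` pick distinct
points `φ i`, one for each point of the image of `a`, and replace `d` by the largest metric below
`d` in which `φ i` and `φ j` are at distance `r · d_Y(i, j)`: the shortest-path metric allowing one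
jump between the `φ i`. For `r` small this metric still induces the topology of `X`, it differs
from `d` by at most the diameter of `{φ i}`, and it contains a copy of `r • a`.
-/
open Filter Topology Function

section Shortcut

variable {X ι : Type*} [PseudoMetricSpace X] [PseudoMetricSpace ι] [Fintype ι]
  (φ : ι → X) (r : ℝ)

/-- The length of a shortest path from `x` to `y` that walks along `dist` and may use one jump
from some `φ i` to some `φ j`, at cost `r * dist i j`. -/
noncomputable def shortcutDist (x y : X) : ℝ :=
  (insert (dist x y) (Finset.univ.image fun q : ι × ι ↦
    dist x (φ q.1) + r * dist q.1 q.2 + dist (φ q.2) y)).min' (Finset.insert_nonempty _ _)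

theorem shortcutDist_le_dist (x y : X) : shortcutDist φ r x y ≤ dist x y :=
  Finset.min'_le _ _ (Finset.mem_insert_self _ _)

theorem shortcutDist_le_jump (x y : X) (i j : ι) :
    shortcutDist φ r x y ≤ dist x (φ i) + r * dist i j + dist (φ j) y :=
  Finset.min'_le _ _ <| Finset.mem_insert_of_mem <|
    Finset.mem_image_of_mem _ (Finset.mem_univ (i, j))

theorem le_shortcutDist {x y : X} {b : ℝ} (hdist : b ≤ dist x y)
    (hjump : ∀ i j, b ≤ dist x (φ i) + r * dist i j + dist (φ j) y) :
    b ≤ shortcutDist φ r x y := by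
  refine Finset.le_min' _ _ _ fun z hz ↦ ?_
  simp only [Finset.mem_insert, Finset.mem_image, Finset.mem_univ, true_and] at hz
  rcases hz with rfl | ⟨⟨i, j⟩, rfl⟩
  exacts [hdist, hjump i j]

theorem shortcutDist_eq_dist_or_jump (x y : X) :
    shortcutDist φ r x y = dist x y ∨
      ∃ i j, shortcutDist φ r x y = dist x (φ i) + r * dist i j + dist (φ j) y := by
  have hmem := Finset.min'_mem _ (Finset.insert_nonempty (dist x y) (Finset.univ.image
    fun q : ι × ι ↦ dist x (φ q.1) + r * dist q.1 q.2 + dist (φ q.2) y))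
  simp only [Finset.mem_insert, Finset.mem_image, Finset.mem_univ, true_and] at hmem
  rcases hmem with h | ⟨⟨i, j⟩, h⟩
  exacts [Or.inl h, Or.inr ⟨i, j, h.symm⟩]

theorem shortcutDist_comm (x y : X) : shortcutDist φ r x y = shortcutDist φ r y x := by
  have key : ∀ x y, shortcutDist φ r x y ≤ shortcutDist φ r y x := fun x y ↦
    le_shortcutDist φ r ((shortcutDist_le_dist φ r x y).trans_eq (dist_comm x y)) fun i j ↦
      (shortcutDist_le_jump φ r x y j i).trans_eq <| by
        rw [dist_comm x, dist_comm j, dist_comm (φ i)]; ring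
  exact (key x y).antisymm (key y x)

variable {r}

theorem shortcutDist_nonneg (hr : 0 ≤ r) (x y : X) : 0 ≤ shortcutDist φ r x y :=
  le_shortcutDist φ r dist_nonneg fun _ _ ↦ by positivity

theorem shortcutDist_self (hr : 0 ≤ r) (x : X) : shortcutDist φ r x x = 0 :=
  ((shortcutDist_le_dist φ r x x).trans_eq (dist_self x)).antisymm (shortcutDist_nonneg φ hr x x)

theorem dist_le_shortcutDist_add (hr : 0 ≤ r) {s : ℝ} (hs₀ : 0 ≤ s)
    (hs : ∀ i j, dist (φ i) (φ j) ≤ s) (x y : X) : dist x y ≤ shortcutDist φ r x y + s := by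
  rcases shortcutDist_eq_dist_or_jump φ r x y with h | ⟨i, j, h⟩
  · linarith
  · have : 0 ≤ r * dist i j := by positivity
    linarith [dist_triangle4 x (φ i) (φ j) y, hs i j]

theorem dist_le_shortcutDist_of_lt (hr : 0 ≤ r) {c : ℝ} (hc : ∀ i j, r * dist i j < c → φ i = φ j)
    {x y : X} (h : shortcutDist φ r x y < c) : dist x y ≤ shortcutDist φ r x y := by
  rcases shortcutDist_eq_dist_or_jump φ r x y with h' | ⟨i, j, h'⟩
  · exact h'.ge
  · have hxi : 0 ≤ dist x (φ i) := dist_nonneg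
    have hjy : 0 ≤ dist (φ j) y := dist_nonneg
    have hij : φ i = φ j := hc i j (by linarith)
    have : 0 ≤ r * dist i j := by positivity
    rw [← hij] at h'
    linarith [dist_triangle x (φ i) y]

theorem shortcutDist_triangle (hr : 0 ≤ r) (hφ : ∀ i j, r * dist i j ≤ dist (φ i) (φ j))
    (x y z : X) : shortcutDist φ r x z ≤ shortcutDist φ r x y + shortcutDist φ r y z := by
  rcases shortcutDist_eq_dist_or_jump φ r x y with hxy | ⟨i, j, hxy⟩ <;>
    rcases shortcutDist_eq_dist_or_jump φ r y z with hyz | ⟨k, l, hyz⟩ <;> rw [hxy, hyz]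
  · exact (shortcutDist_le_dist φ r x z).trans (dist_triangle x y z)
  · have := shortcutDist_le_jump φ r x z k l
    linarith [dist_triangle x y (φ k)]
  · have := shortcutDist_le_jump φ r x z i j
    linarith [dist_triangle (φ j) y z]
  -- Two jumps `i → j`, `k → l` cost at least as much as the single jump `i → l`,
  -- since walking from `φ j` to `φ k` costs at least `r * dist j k`.
  · have := shortcutDist_le_jump φ r x z i l
    have : r * dist i l ≤ r * dist i j + r * dist j k + r * dist k l := by
      rw [← mul_add, ← mul_add]
      exact mul_le_mul_of_nonneg_left (dist_triangle4 i j k l) hr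
    linarith [hφ j k, dist_triangle (φ j) y (φ k)]

theorem shortcutDist_apply_apply (hr : 0 ≤ r) (hφ : ∀ i j, r * dist i j ≤ dist (φ i) (φ j))
    (i j : ι) : shortcutDist φ r (φ i) (φ j) = r * dist i j := by
  refine le_antisymm ?_ (le_shortcutDist φ r (hφ i j) fun k l ↦ ?_)
  · simpa using shortcutDist_le_jump φ r (φ i) (φ j) i j
  · have : r * dist i j ≤ r * dist i k + r * dist k l + r * dist l j := by
      rw [← mul_add, ← mul_add]
      exact mul_le_mul_of_nonneg_left (dist_triangle4 i k l j) hr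
    linarith [hφ i k, hφ l j]

theorem isOpen_iff_shortcutDist (hr : 0 ≤ r) {c : ℝ} (hc₀ : 0 < c)
    (hc : ∀ i j, r * dist i j < c → φ i = φ j) (s : Set X) :
    IsOpen s ↔ ∀ x ∈ s, ∃ ε > 0, ∀ y, shortcutDist φ r x y < ε → y ∈ s := by
  simp only [Metric.isOpen_iff, Set.subset_def, Metric.mem_ball, dist_comm _ (_ : X)]
  refine forall₂_congr fun x _ ↦ ⟨fun ⟨ε, hε, hs⟩ ↦ ⟨min ε c, lt_min hε hc₀, fun y hy ↦ ?_⟩,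
    fun ⟨ε, hε, hs⟩ ↦ ⟨ε, hε, fun y hy ↦ hs y ((shortcutDist_le_dist φ r x y).trans_lt hy)⟩⟩
  exact hs y <| (dist_le_shortcutDist_of_lt φ hr hc (hy.trans_le (min_le_right _ _))).trans_lt
    (hy.trans_le (min_le_left _ _))

end Shortcut

noncomputable abbrev shortcutMetricSpace {X ι : Type*} [MetricSpace X] [PseudoMetricSpace ι]
    [Fintype ι] (φ : ι → X) {r c : ℝ} (hr : 0 ≤ r) (hφ : ∀ i j, r * dist i j ≤ dist (φ i) (φ j))
    (hc₀ : 0 < c) (hc : ∀ i j, r * dist i j < c → φ i = φ j) : MetricSpace X :=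
  .ofDistTopology (shortcutDist φ r) (shortcutDist_self φ hr) (shortcutDist_comm φ r)
    (shortcutDist_triangle φ hr hφ) (isOpen_iff_shortcutDist φ hr hc₀ hc) fun _ _ h ↦
      dist_le_zero.1 <| (dist_le_shortcutDist_of_lt φ hr hc (h.trans_lt hc₀)).trans_eq h

theorem Finite.exists_pos_forall_eq_of_dist_lt (ι : Type*) [MetricSpace ι] [Finite ι] :
    ∃ ε > 0, ∀ i j : ι, dist i j < ε → i = j := by
  have : ∀ᶠ ε in 𝓝 (0 : ℝ), ∀ i j : ι, i ≠ j → ε < dist i j :=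
    eventually_all.2 fun i ↦ eventually_all.2 fun j ↦ by
      by_cases h : i = j
      · simp [h]
      · filter_upwards [eventually_lt_nhds (dist_pos.2 h)] with ε hε _ using hε
  obtain ⟨ε, hε, hε₀⟩ := ((this.filter_mono nhdsWithin_le_nhds).and
    (self_mem_nhdsWithin : Set.Ioi (0 : ℝ) ∈ 𝓝[>] 0)).exists
  exact ⟨ε, hε₀, fun i j hij ↦ by_contra fun h ↦ (hε i j h).not_gt hij⟩

theorem Finite.exists_pos_forall_mul_dist_le {X ι : Type*} [MetricSpace X] [PseudoMetricSpace ι]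
    [Finite ι] {φ : ι → X} (hφ : Injective φ) :
    ∃ r > 0, ∀ i j, r * dist i j ≤ dist (φ i) (φ j) := by
  have : ∀ᶠ r in 𝓝 (0 : ℝ), ∀ i j, r * dist i j ≤ dist (φ i) (φ j) :=
    eventually_all.2 fun i ↦ eventually_all.2 fun j ↦ by
      by_cases h : i = j
      · simp [h]
      · have : Tendsto (fun r : ℝ ↦ r * dist i j) (𝓝 0) (𝓝 0) := by
          simpa using (continuous_mul_const (dist i j)).tendsto 0
        exact (this.eventually_lt_const (dist_pos.2 (hφ.ne h))).mono fun _ ↦ le_of_lt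
  obtain ⟨r, hr, hr₀⟩ := ((this.filter_mono nhdsWithin_le_nhds).and
    (self_mem_nhdsWithin : Set.Ioi (0 : ℝ) ∈ 𝓝[>] 0)).exists
  exact ⟨r, hr₀, hr⟩

theorem Set.Infinite.exists_injective_forall_mem {X : Type*} {s : Set X} (hs : s.Infinite)
    (ι : Type*) [Finite ι] : ∃ φ : ι → X, Injective φ ∧ ∀ i, φ i ∈ s := by
  obtain ⟨g, hg⟩ := exists_injective_nat ι
  exact ⟨fun i ↦ hs.natEmbedding s (g i), Subtype.val_injective.comp
    ((hs.natEmbedding s).injective.comp hg), fun i ↦ (hs.natEmbedding s (g i)).2⟩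

section MetD

variable {X : Type*}

theorem metD_self (d : MetricSpace X) : metD d d = 0 := by
  simp [metD]

theorem ofReal_abs_sub_le_metD (d e : MetricSpace X) (x y : X) :
    ENNReal.ofReal |mdist d x y - mdist e x y| ≤ metD d e :=
  le_iSup (fun p : X × X ↦ ENNReal.ofReal |mdist d p.1 p.2 - mdist e p.1 p.2|) (x, y)

theorem metD_le_ofReal {d e : MetricSpace X} {s : ℝ}
    (h : ∀ x y, |mdist d x y - mdist e x y| ≤ s) : metD d e ≤ ENNReal.ofReal s :=
  iSup_le fun p ↦ ENNReal.ofReal_le_ofReal (h p.1 p.2)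

theorem metD_triangle (d e m : MetricSpace X) : metD d m ≤ metD d e + metD e m :=
  iSup_le fun p ↦ calc
    _ ≤ ENNReal.ofReal (|mdist d p.1 p.2 - mdist e p.1 p.2| +
          |mdist e p.1 p.2 - mdist m p.1 p.2|) :=
      ENNReal.ofReal_le_ofReal (abs_sub_le _ _ _)
    _ ≤ _ := ENNReal.ofReal_add_le.trans <|
      add_le_add (ofReal_abs_sub_le_metD d e p.1 p.2) (ofReal_abs_sub_le_metD e m p.1 p.2)

end MetD

namespace Met

variable {X : Type*} [TopologicalSpace X]

theorem isOpen_ball (d : Met X) {ε : ℝ≥0∞} (hε : 0 < ε) :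
    IsOpen {e : Met X | metD d.1 e.1 < ε} :=
  TopologicalSpace.isOpen_generateFrom_of_mem ⟨d, ε, hε, rfl⟩

theorem isOpen_iff {U : Set (Met X)} :
    IsOpen U ↔ ∀ d ∈ U, ∃ ε > 0, {e : Met X | metD d.1 e.1 < ε} ⊆ U := by
  refine ⟨fun hU ↦ ?_, fun h ↦ isOpen_iff_forall_mem_open.2 fun d hd ↦ ?_⟩
  · induction hU with
    | basic V hV =>
      obtain ⟨d, ε, -, rfl⟩ := hV
      intro e (he : metD d.1 e.1 < ε)
      refine ⟨ε - metD d.1 e.1, tsub_pos_of_lt he, fun m (hm : metD e.1 m.1 < _) ↦ ?_⟩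
      calc metD d.1 m.1 ≤ metD d.1 e.1 + metD e.1 m.1 := metD_triangle _ _ _
        _ < metD d.1 e.1 + (ε - metD d.1 e.1) := ENNReal.add_lt_add_left he.ne_top hm
        _ = ε := add_tsub_cancel_of_le he.le
    | univ => exact fun _ _ ↦ ⟨1, one_pos, Set.subset_univ _⟩
    | inter V W _ _ hV hW =>
      rintro d ⟨hdV, hdW⟩
      obtain ⟨ε, hε, hεV⟩ := hV d hdV
      obtain ⟨δ, hδ, hδW⟩ := hW d hdW
      exact ⟨min ε δ, lt_min hε hδ, fun e (he : metD d.1 e.1 < _) ↦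
        ⟨hεV (he.trans_le (min_le_left _ _)), hδW (he.trans_le (min_le_right _ _))⟩⟩
    | sUnion S _ hS =>
      rintro d ⟨V, hV, hdV⟩
      obtain ⟨ε, hε, hεV⟩ := hS V hV d hdV
      exact ⟨ε, hε, hεV.trans (Set.subset_sUnion_of_mem hV)⟩
  · obtain ⟨ε, hε, hεU⟩ := h d hd
    exact ⟨_, hεU, isOpen_ball d hε, by simpa [metD_self] using hε⟩

theorem dense_iff {s : Set (Met X)} :
    Dense s ↔ ∀ d : Met X, ∀ ε > 0, ∃ e ∈ s, metD d.1 e.1 < ε := by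
  refine ⟨fun hs d ε hε ↦ ?_, fun h ↦ dense_iff_inter_open.2 fun U hU ⟨d, hd⟩ ↦ ?_⟩
  · obtain ⟨e, he, hes⟩ := hs.inter_open_nonempty _ (isOpen_ball d hε)
      ⟨d, by simpa [metD_self] using hε⟩
    exact ⟨e, hes, he⟩
  · obtain ⟨ε, hε, hεU⟩ := isOpen_iff.1 hU d hd
    obtain ⟨e, hes, he⟩ := h d ε hε
    exact ⟨e, hεU he, hes⟩

theorem exists_metD_lt_forall_mdist_eq_mul (hX : ¬DiscreteTopology X) (d : Met X)
    {ε : ℝ≥0∞} (hε : 0 < ε) (ι : Type*) [MetricSpace ι] [Finite ι] :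
    ∃ e : Met X, metD d.1 e.1 < ε ∧
      ∃ r > 0, ∃ φ : ι → X, ∀ i j, mdist e.1 (φ i) (φ j) = r * dist i j := by
  obtain ⟨d, hd : d.toUniformSpace.toTopologicalSpace = _⟩ := d
  subst hd
  let := d
  have := Fintype.ofFinite ι
  obtain ⟨p, hp⟩ : ∃ p : X, (𝓝[≠] p).NeBot := by
    simpa [discreteTopology_iff_nhds_ne, ← neBot_iff] using hX
  obtain ⟨δ, -, hδ, hδε⟩ := ENNReal.lt_iff_exists_real_btwn.1 hε
  rw [ENNReal.ofReal_pos] at hδ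
  obtain ⟨φ, hφ_inj, hφ_mem⟩ := (infinite_of_mem_nhds p
    (Metric.ball_mem_nhds p (half_pos hδ))).exists_injective_forall_mem ι
  obtain ⟨r, hr, hφ⟩ := Finite.exists_pos_forall_mul_dist_le hφ_inj
  obtain ⟨κ, hκ, hsep⟩ := Finite.exists_pos_forall_eq_of_dist_lt ι
  have hc : ∀ i j, r * dist i j < r * κ → φ i = φ j := fun i j h ↦
    congrArg φ (hsep i j (lt_of_mul_lt_mul_left h hr.le))
  refine ⟨⟨shortcutMetricSpace φ hr.le hφ (mul_pos hr hκ) hc, rfl⟩, ?_, r, hr, φ,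
    shortcutDist_apply_apply φ hr.le hφ⟩
  have hdiam : ∀ i j, dist (φ i) (φ j) ≤ δ := fun i j ↦ by
    linarith [dist_triangle_right (φ i) (φ j) p, Metric.mem_ball.1 (hφ_mem i),
      Metric.mem_ball.1 (hφ_mem j)]
  refine (metD_le_ofReal fun x y ↦ ?_).trans_lt hδε
  change |dist x y - shortcutDist φ r x y| ≤ δ
  rw [abs_le]
  constructor <;>
    linarith [shortcutDist_le_dist φ r x y, dist_le_shortcutDist_add φ hr.le hδ.le hdiam x y]

end Met

instance PairIdx.instFintype (n : ℕ) : Fintype (PairIdx n) :=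
  inferInstanceAs (Fintype {p : Fin n × Fin n // p.1 < p.2})

theorem isOpen_setOf_not_satisfiesMetricIneq {X : Type*} [TopologicalSpace X] {n : ℕ}
    {f : (PairIdx n → ℝ) → ℝ} (hf : Continuous f) :
    IsOpen {d : Met X | ¬SatisfiesMetricIneq d.1 n f} := by
  refine Met.isOpen_iff.2 fun d hd ↦ ?_
  obtain ⟨a, ha⟩ : ∃ a : Fin n → X, f (fun p ↦ mdist d.1 (a p.1.1) (a p.1.2)) < 0 := by
    simpa [SatisfiesMetricIneq] using hd
  obtain ⟨δ, hδ, hball⟩ := Metric.isOpen_iff.1 (isOpen_Iio.preimage hf) _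
    (show _ ∈ f ⁻¹' Set.Iio 0 from ha)
  refine ⟨ENNReal.ofReal δ, ENNReal.ofReal_pos.2 hδ, fun e he hsat ↦ (hsat a).not_gt (hball ?_)⟩
  rw [Metric.mem_ball, dist_pi_lt_iff hδ]
  intro p
  rw [Real.dist_eq, abs_sub_comm]
  exact (ENNReal.ofReal_lt_ofReal_iff hδ).1 ((ofReal_abs_sub_le_metD _ _ _ _).trans_lt he)

theorem PositivelySubHomogeneous.apply_smul_neg {n : ℕ} {f : (PairIdx n → ℝ) → ℝ}
    (hf : PositivelySubHomogeneous f) {x : PairIdx n → ℝ} (hx : f x < 0) {r : ℝ} (hr : 0 < r) :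
    f (r • x) < 0 := by
  obtain ⟨c, -, hc⟩ := hf
  exact (hc x r hr).trans_lt (mul_neg_of_pos_of_neg (Real.rpow_pos_of_pos hr c) hx)

theorem failing_metric_inequality_dense_open_general (X : Type u) [TopologicalSpace X]
    (hX : ¬DiscreteTopology X)
    (n : ℕ) (f : (PairIdx n → ℝ) → ℝ) (hf : Continuous f)
    (hsub : PositivelySubHomogeneous f)
    (hcex : ∃ (Y : Type v) (mY : MetricSpace Y), ¬SatisfiesMetricIneq mY n f) :
    IsOpen { d : Met X | ¬SatisfiesMetricIneq d.1 n f } ∧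
    Dense { d : Met X | ¬SatisfiesMetricIneq d.1 n f } := by
  refine ⟨isOpen_setOf_not_satisfiesMetricIneq hf, Met.dense_iff.2 fun d ε hε ↦ ?_⟩
  obtain ⟨Y, mY, hY⟩ := hcex
  obtain ⟨a, ha⟩ : ∃ a : Fin n → Y, f (fun p ↦ mdist mY (a p.1.1) (a p.1.2)) < 0 := by
    simpa [SatisfiesMetricIneq] using hY
  let := mY
  obtain ⟨e, hde, r, hr, φ, hφ⟩ := Met.exists_metD_lt_forall_mdist_eq_mul hX d hε (Set.range a)
  refine ⟨e, fun he ↦ (he (φ ∘ Set.rangeFactorization a)).not_gt ?_, hde⟩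
  have hscaled : (fun p : PairIdx n ↦ mdist e.1 (φ (Set.rangeFactorization a p.1.1))
      (φ (Set.rangeFactorization a p.1.2))) = r • fun p ↦ mdist mY (a p.1.1) (a p.1.2) :=
    funext fun p ↦ hφ _ _
  exact hscaled ▸ hsub.apply_smul_neg ha hr

theorem failing_metric_inequality_dense_open (X : Type u) [TopologicalSpace X]
    [TopologicalSpace.MetrizableSpace X] (hX : ¬DiscreteTopology X)
    (n : ℕ) (hn : 2 ≤ n) (f : (PairIdx n → ℝ) → ℝ) (hf : Continuous f)
    (hsub : PositivelySubHomogeneous f)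
    (hcex : ∃ (Y : Type v) (mY : MetricSpace Y), ¬SatisfiesMetricIneq mY n f) :
    IsOpen { d : Met X | ¬SatisfiesMetricIneq d.1 n f } ∧
    Dense { d : Met X | ¬SatisfiesMetricIneq d.1 n f } :=
  failing_metric_inequality_dense_open_general X hX n f hf hsub hcex
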